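/- Let b_1, …, b_m be integers, each at least 2 (m ≥ 1). Then the Hirzebruch–Jung continued fraction [[b_1, …, b_m, (2)^e]] (the sequence b_1, …, b_m followed by e copies of 2) converges, as e → ∞, to [[b_1, …, b_{m−1}, b_m − 1]]. -/

import Mathlib

/-!
Splitting off the tail gives `[[b₁, …, b_m, (2)^e]] = [[b₁, …, b_m, x_e]]` with
`x_e = [[(2)^e]] = 1 + 1/e → 1`. Since all `bᵢ ≥ 2`, every partial value of `[[b₁, …, b_m, x]]`
stays `≥ 1` for `x ≥ 1`, so no denominator vanishes and `x ↦ [[b₁, …, b_m, x]]` is continuous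
at `x = 1`. Finally `[[b₁, …, b_m, 1]] = [[b₁, …, b_{m-1}, b_m - 1]]` because `b_m - 1/1 = b_m - 1`.
-/

/-- The Hirzebruch–Jung continued fraction `[[a₁, …, aₙ]]`, defined recursively by
`[[aₙ]] = aₙ` and `[[a₁, …, aₙ]] = a₁ - 1/[[a₂, …, aₙ]]`. The value on the empty
list is junk. -/
noncomputable def hj : List ℝ → ℝ
  | [] => 0
  | [a] => a
  | a :: b :: l => a - 1 / hj (b :: l)

open Filter Topology

lemma hj_cons (a : ℝ) {l : List ℝ} (hl : l ≠ []) : hj (a :: l) = a - 1 / hj l := by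
  cases l with
  | nil => exact absurd rfl hl
  | cons b l => rfl

lemma hj_append_eq_hj_append_singleton (l : List ℝ) {t : List ℝ} (ht : t ≠ []) :
    hj (l ++ t) = hj (l ++ [hj t]) := by
  induction l with
  | nil => rfl
  | cons a l ih => rw [List.cons_append, List.cons_append, hj_cons a (by simp [ht]),
      hj_cons a (by simp), ih]

lemma one_le_hj_append_singleton {l : List ℝ} (hl : ∀ b ∈ l, 2 ≤ b) {x : ℝ} (hx : 1 ≤ x) :
    1 ≤ hj (l ++ [x]) := by
  induction l with
  | nil => exact hx
  | cons a l ih =>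
    have htail : 1 ≤ hj (l ++ [x]) := ih fun b hb => hl b (List.mem_cons_of_mem a hb)
    have ha : 2 ≤ a := hl a List.mem_cons_self
    have hinv : 1 / hj (l ++ [x]) ≤ 1 := by rwa [div_le_one (by linarith)]
    rw [List.cons_append, hj_cons a (by simp)]
    linarith

lemma continuousAt_hj_append_singleton {l : List ℝ} (hl : ∀ b ∈ l, 2 ≤ b) {x : ℝ}
    (hx : 1 ≤ x) : ContinuousAt (fun y => hj (l ++ [y])) x := by
  induction l with
  | nil => exact continuousAt_id
  | cons a l ih =>
    have hl' : ∀ b ∈ l, 2 ≤ b := fun b hb => hl b (List.mem_cons_of_mem a hb)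
    have hne : hj (l ++ [x]) ≠ 0 := by linarith [one_le_hj_append_singleton hl' hx]
    simp only [List.cons_append, hj_cons a (by simp : l ++ [_] ≠ [])]
    exact continuousAt_const.sub (continuousAt_const.div (ih hl') hne)

lemma hj_replicate_two_succ (e : ℕ) : hj (List.replicate (e + 1) 2) = 1 + 1 / ((e : ℝ) + 1) := by
  induction e with
  | zero => norm_num [hj]
  | succ k ih =>
    rw [List.replicate_succ, hj_cons 2 (by simp), ih]
    push_cast
    field_simp
    ring

lemma tendsto_hj_replicate_two : Tendsto (fun e => hj (List.replicate e 2)) atTop (𝓝 1) := by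
  rw [← tendsto_add_atTop_iff_nat 1]
  simp only [hj_replicate_two_succ]
  simpa using tendsto_one_div_add_atTop_nhds_zero_nat.const_add (1 : ℝ)

lemma hj_append_sub_one (l : List ℝ) (b : ℝ) : hj (l ++ [b - 1]) = hj (l ++ [b] ++ [1]) := by
  rw [List.append_assoc, List.singleton_append,
    hj_append_eq_hj_append_singleton l (t := [b, 1]) (List.cons_ne_nil _ _)]
  norm_num [hj]

/-- If `b₁, …, b_m` are integers, each at least `2`, then `[[b₁, …, b_m, (2)^e]]`
converges, as `e → ∞`, to `[[b₁, …, b_{m-1}, b_m − 1]]`. -/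
theorem hj_tendsto_replicate_two (bs : List ℕ) (hb : bs ≠ []) (h2 : ∀ x ∈ bs, 2 ≤ x) :
    Filter.Tendsto
      (fun e : ℕ => hj (bs.map (fun x => (x : ℝ)) ++ List.replicate e (2 : ℝ)))
      Filter.atTop
      (nhds (hj (bs.dropLast.map (fun x => (x : ℝ)) ++ [(bs.getLast hb : ℝ) - 1]))) := by
  set L := bs.map (fun x => (x : ℝ)) with hL_def
  have hL_cast : L = bs.map Nat.cast := by simp [L, List.map_eq_flatMap]
  have hL : ∀ b ∈ L, 2 ≤ b := by simpa [hL_cast] using h2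
  have hsplit : L = bs.dropLast.map (fun x => (x : ℝ)) ++ [(bs.getLast hb : ℝ)] := by
    conv_lhs => rw [hL_def, ← List.dropLast_append_getLast hb]
    simp
  rw [hj_append_sub_one, ← hsplit]
  refine ((continuousAt_hj_append_singleton hL le_rfl).tendsto.comp
    tendsto_hj_replicate_two).congr' ?_
  filter_upwards [eventually_ge_atTop 1] with e he
  exact (hj_append_eq_hj_append_singleton L (by rw [Ne, List.replicate_eq_nil_iff]; omega)).symm
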